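/- The following assertions are equivalent: (1) (A,C,ψ,x) is cleft; (2) the map *can : Hom_k(C,A) → End_{B'}(A), *can(f)(a) = a_ψ f(x^ψ), is a bijection onto the left B'-linear endomorphisms of A, and the right normal basis property holds, i.e. there exists a bijection h : B' ⊗_k C → A that is left B'-linear and right C-colinear (where A carries the coaction a ↦ a_ψ ⊗ x^ψ and B' ⊗_k C carries the coaction id ⊗ Δ). -/

import Mathlib

open TensorProduct

noncomputable section

variable {k A C : Type*} [CommRing k] [Ring A] [Algebra k A]
  [AddCommGroup C] [Module k C] [Coalgebra k C]

/-- An entwining structure `(A, C, ψ)`. -/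
structure IsEntwining (k : Type*) {A C : Type*} [CommRing k] [Ring A] [Algebra k A]
    [AddCommGroup C] [Module k C] [Coalgebra k C]
    (ψ : C ⊗[k] A →ₗ[k] A ⊗[k] C) : Prop where
  mul_compat : ψ ∘ₗ LinearMap.lTensor C (LinearMap.mul' k A) =
    LinearMap.rTensor C (LinearMap.mul' k A) ∘ₗ (TensorProduct.assoc k A A C).symm.toLinearMap ∘ₗ
      LinearMap.lTensor A ψ ∘ₗ (TensorProduct.assoc k A C A).toLinearMap ∘ₗ
      LinearMap.rTensor A ψ ∘ₗ (TensorProduct.assoc k C A A).symm.toLinearMap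
  one_compat : ∀ c : C, ψ (c ⊗ₜ[k] 1) = 1 ⊗ₜ[k] c
  comul_compat : LinearMap.lTensor A Coalgebra.comul ∘ₗ ψ =
    (TensorProduct.assoc k A C C).toLinearMap ∘ₗ LinearMap.rTensor C ψ ∘ₗ
      (TensorProduct.assoc k C A C).symm.toLinearMap ∘ₗ LinearMap.lTensor C ψ ∘ₗ
      (TensorProduct.assoc k C C A).toLinearMap ∘ₗ LinearMap.rTensor A Coalgebra.comul
  counit_compat : ∀ (c : C) (a : A),
    TensorProduct.rid k A (LinearMap.lTensor A Coalgebra.counit (ψ (c ⊗ₜ[k] a))) =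
      (Coalgebra.counit (R := k) c) • a

/-- The smash product multiplication on `Hom_k(C,A)`: `(f # g)(c) = f(c₂)_ψ g((c₁)^ψ)`. -/
def smashMul (ψ : C ⊗[k] A →ₗ[k] A ⊗[k] C) (f g : C →ₗ[k] A) : C →ₗ[k] A :=
  LinearMap.mul' k A ∘ₗ LinearMap.lTensor A g ∘ₗ ψ ∘ₗ LinearMap.lTensor C f ∘ₗ Coalgebra.comul

/-- The unit of `#(C,A)`: `c ↦ ε(c) 1_A`. -/
def smashOne (k : Type*) (A C : Type*) [CommRing k] [Ring A] [Algebra k A]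
    [AddCommGroup C] [Module k C] [Coalgebra k C] : C →ₗ[k] A :=
  Algebra.linearMap k A ∘ₗ Coalgebra.counit

/-- The ring morphism `i : A → #(C,A)`, `i(a)(c) = ε(c) a`. -/
def smashIota (k : Type*) {A : Type*} (C : Type*) [CommRing k] [Ring A] [Algebra k A]
    [AddCommGroup C] [Module k C] [Coalgebra k C] (a : A) : C →ₗ[k] A :=
  (Coalgebra.counit : C →ₗ[k] k).smulRight a


/-- Convolution product on `Hom_k(C,A)`: `(f * g)(c) = f(c₁) g(c₂)`. -/
def conv (f g : C →ₗ[k] A) : C →ₗ[k] A :=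
  LinearMap.mul' k A ∘ₗ TensorProduct.map f g ∘ₗ Coalgebra.comul

/-- `q ∈ Q'` iff `q(c₂)_ψ ⊗ (c₁)^ψ = q(c) ⊗ x` for all `c`. -/
def QprimeCond (ψ : C ⊗[k] A →ₗ[k] A ⊗[k] C) (x : C) (q : C →ₗ[k] A) : Prop :=
  ∀ c : C, ψ (LinearMap.lTensor C q (Coalgebra.comul c)) = q c ⊗ₜ[k] x

/-- `(A,C,ψ,x)` is cleft if there is a convolution invertible `λ ∈ Q'`. -/
def IsCleft (ψ : C ⊗[k] A →ₗ[k] A ⊗[k] C) (x : C) : Prop :=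
  ∃ lam lamInv : C →ₗ[k] A,
    (∀ c : C, conv lam lamInv c = (Coalgebra.counit (R := k) c) • (1 : A)) ∧
    (∀ c : C, conv lamInv lam c = (Coalgebra.counit (R := k) c) • (1 : A)) ∧
    QprimeCond ψ x lam

/-- The coinvariants `B' = {b : A | b_ψ ⊗ x^ψ = b ⊗ x}` as a `k`-submodule of `A`. -/
def Bprime (ψ : C ⊗[k] A →ₗ[k] A ⊗[k] C) (x : C) : Submodule k A :=
  LinearMap.ker (ψ ∘ₗ TensorProduct.mk k C A x - (TensorProduct.mk k A C).flip x)

/-- The map `*can : Hom_k(C,A) → End(A)`, `*can(f)(a) = a_ψ f(x^ψ)`. -/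
def starCan (ψ : C ⊗[k] A →ₗ[k] A ⊗[k] C) (x : C) (f : C →ₗ[k] A) : A →ₗ[k] A :=
  LinearMap.mul' k A ∘ₗ LinearMap.lTensor A f ∘ₗ ψ ∘ₗ TensorProduct.mk k C A x

/-!
`Hom_k(C, A)` is an algebra under convolution and acts by convolution,
`(f ⋆ F)(c) = f(c₁) F(c₂)` (`convSMul`), on `Hom_k(C, M)` for every `A`-module `M`. Since `x` is
grouplike, `ρ(a) = a_ψ ⊗ x^ψ` (`coaction`) is a counital coassociative coaction with
`ρ(ba) = b ρ(a)` for `b ∈ B'`. This gives the two identities everything rests on: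
`*can(f)(γ(c)) = (γ * f)(c)` for every colinear `γ`, and `*can(f * g)(a) = *can(f)(a₀) g(a₁)`.

If `λ ∈ Q'` is convolution invertible, then `λ⁻¹` is colinear (cancel `λ` from
`λ ⋆ (ρ ∘ λ⁻¹) = 1 ⊗ - = λ ⋆ ((λ⁻¹ ⊗ id) ∘ Δ)`) and `*can(λ)` takes values in `B'`. Hence
`b ⊗ c ↦ b λ⁻¹(c)` is a normal basis with inverse `a ↦ *can(λ)(a₀) ⊗ a₁`, `f` is recovered from
`*can(f) ∘ λ⁻¹ = λ⁻¹ * f`, and a `B'`-linear `g` equals `*can(λ * (g ∘ λ⁻¹))`.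

Conversely, a normal basis `h` is `b ⊗ c ↦ b γ(c)` with `γ = h(1 ⊗ -)` colinear. Transport along
`h` turns each `t` into the `B'`-linear endomorphism `b γ(c) ↦ b t(c)`, and sends `γ * f` to
`*can(f)`; so bijectivity of `*can` makes `γ` convolution invertible. Its inverse `λ` has
`*can(λ)(b γ(c)) = ε(c) b ∈ B'`, which, `γ` being colinear and invertible, forces `λ ∈ Q'`.
-/

open LinearMap Coalgebra WithConv

section SMulLift

variable {M N P : Type*} [AddCommMonoid M] [Module A M] [Module k M] [IsScalarTower k A M]
  [AddCommMonoid N] [Module k N] [AddCommMonoid P] [Module k P]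

def smulLift (F : N →ₗ[k] M) : A ⊗[k] N →ₗ[k] M :=
  (AlgebraTensorModule.lift (toSpanSingleton A (N →ₗ[k] M) F)).restrictScalars k

@[simp] lemma smulLift_tmul (F : N →ₗ[k] M) (a : A) (n : N) :
    smulLift F (a ⊗ₜ[k] n) = a • F n := rfl

lemma smulLift_smul (F : N →ₗ[k] M) (a : A) (w : A ⊗[k] N) :
    smulLift F (a • w) = a • smulLift F w :=
  map_smul (AlgebraTensorModule.lift (toSpanSingleton A (N →ₗ[k] M) F)) a w

lemma smulLift_comp_lTensor (F : N →ₗ[k] M) (g : P →ₗ[k] N) :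
    smulLift F ∘ₗ lTensor A g = smulLift (F ∘ₗ g) := by
  ext; simp

lemma smulLift_eq_mul'_comp_lTensor (f : N →ₗ[k] A) : smulLift f = mul' k A ∘ₗ lTensor A f := by
  ext; simp

lemma smul_eq_rTensor_mulLeft (a : A) (w : A ⊗[k] N) : a • w = rTensor N (mulLeft k a) w := by
  induction w using TensorProduct.induction_on with
  | zero => simp
  | tmul b n => simp [TensorProduct.smul_tmul']
  | add w w' hw hw' => simp only [smul_add, map_add, hw, hw']

lemma smulLift_mk_one : smulLift (TensorProduct.mk k A N 1) = LinearMap.id := by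
  ext; simp [TensorProduct.smul_tmul']

lemma smulLift_eq_rTensor_mul' (F : P →ₗ[k] A ⊗[k] N) :
    smulLift F = rTensor N (mul' k A) ∘ₗ (TensorProduct.assoc k A A N).symm.toLinearMap ∘ₗ
      lTensor A F := by
  ext a p
  simp only [AlgebraTensorModule.curry_apply, curry_apply, restrictScalars_apply, smulLift_tmul,
    coe_comp, Function.comp_apply, lTensor_tmul, LinearEquiv.coe_coe]
  rw [smul_eq_rTensor_mulLeft]
  induction F p using TensorProduct.induction_on with
  | zero => simp
  | tmul b n => simp
  | add w w' hw hw' => simp only [tmul_add, map_add, hw, hw']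

lemma smulLift_flip_mk_comp (q : P →ₗ[k] A) (n : N) :
    smulLift ((TensorProduct.mk k A N).flip n ∘ₗ q) =
      (TensorProduct.mk k A N).flip n ∘ₗ (smulLift q : A ⊗[k] P →ₗ[k] A) := by
  ext; simp [TensorProduct.smul_tmul']

end SMulLift

section Convolution

variable {M : Type*} [AddCommMonoid M] [Module A M] [Module k M] [IsScalarTower k A M]

lemma conv_assoc (f g h : C →ₗ[k] A) : conv (conv f g) h = conv f (conv g h) :=
  congrArg ofConv (mul_assoc (toConv f) (toConv g) (toConv h))

lemma smashOne_conv (f : C →ₗ[k] A) : conv (smashOne k A C) f = f :=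
  congrArg ofConv (one_mul (toConv f))

lemma conv_smashOne (f : C →ₗ[k] A) : conv f (smashOne k A C) = f :=
  congrArg ofConv (mul_one (toConv f))

lemma smashOne_apply (c : C) : smashOne k A C c = counit (R := k) c • (1 : A) :=
  Algebra.algebraMap_eq_smul_one _

def convSMul (f : C →ₗ[k] A) (F : C →ₗ[k] M) : C →ₗ[k] M :=
  smulLift F ∘ₗ rTensor C f ∘ₗ comul

lemma convSMul_convSMul (f g : C →ₗ[k] A) (F : C →ₗ[k] M) :
    convSMul f (convSMul g F) = convSMul (conv f g) F := by
  have key : smulLift (smulLift F ∘ₗ rTensor C g) ∘ₗ rTensor (C ⊗[k] C) f ∘ₗ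
      (TensorProduct.assoc k C C C).toLinearMap = smulLift F ∘ₗ rTensor C (mul' k A ∘ₗ map f g) := by
    apply TensorProduct.ext_threefold
    intro c₁ c₂ c₃
    simp [mul_smul]
  calc convSMul f (convSMul g F)
      = smulLift (smulLift F ∘ₗ rTensor C g) ∘ₗ (lTensor A comul ∘ₗ rTensor C f) ∘ₗ comul := by
        rw [convSMul, convSMul, ← comp_assoc comul (rTensor C g) (smulLift F),
          ← smulLift_comp_lTensor (smulLift F ∘ₗ rTensor C g) comul]
        simp only [comp_assoc]
    _ = (smulLift (smulLift F ∘ₗ rTensor C g) ∘ₗ rTensor (C ⊗[k] C) f ∘ₗ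
          (TensorProduct.assoc k C C C).toLinearMap) ∘ₗ rTensor C comul ∘ₗ comul := by
        rw [lTensor_comp_rTensor, ← rTensor_comp_lTensor]
        simp only [comp_assoc, coassoc]
    _ = convSMul (conv f g) F := by
        rw [key]
        simp only [conv, convSMul, rTensor_comp, comp_assoc]

lemma smashOne_convSMul (F : C →ₗ[k] M) : convSMul (smashOne k A C) F = F := by
  ext c
  simp [convSMul, smashOne, rTensor_comp]

lemma convSMul_leftInverse {f g : C →ₗ[k] A} (h : conv g f = smashOne k A C) :
    Function.LeftInverse (convSMul (M := M) g) (convSMul f) := fun F => by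
  rw [convSMul_convSMul, h, smashOne_convSMul]

lemma convSMul_mk_one (f : C →ₗ[k] A) :
    convSMul f (TensorProduct.mk k A C 1) = rTensor C f ∘ₗ comul := by
  rw [convSMul, smulLift_mk_one, id_comp]

lemma convSMul_eq_conv (f g : C →ₗ[k] A) : convSMul f g = conv f g := by
  rw [convSMul, conv, smulLift_eq_mul'_comp_lTensor, comp_assoc, ← comp_assoc _ _ (lTensor A g),
    lTensor_comp_rTensor]

end Convolution

section Entwining

variable (ψ : C ⊗[k] A →ₗ[k] A ⊗[k] C) (x : C)

def coaction : A →ₗ[k] A ⊗[k] C := ψ ∘ₗ TensorProduct.mk k C A x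

def twistedMap (f : C →ₗ[k] A) : C →ₗ[k] A ⊗[k] C := ψ ∘ₗ lTensor C f ∘ₗ comul

def IsColinear (γ : C →ₗ[k] A) : Prop := coaction ψ x ∘ₗ γ = rTensor C γ ∘ₗ comul

def normalBasisMap (γ : C →ₗ[k] A) : Bprime ψ x ⊗[k] C →ₗ[k] A :=
  mul' k A ∘ₗ map (Bprime ψ x).subtype γ

variable {ψ x}

section
omit [Coalgebra k C]

@[simp] lemma coaction_apply (a : A) : coaction ψ x a = ψ (x ⊗ₜ[k] a) := rfl

lemma starCan_eq (f : C →ₗ[k] A) : starCan ψ x f = smulLift f ∘ₗ coaction ψ x := by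
  rw [starCan, smulLift_eq_mul'_comp_lTensor]
  rfl

lemma mem_Bprime_iff {b : A} : b ∈ Bprime ψ x ↔ coaction ψ x b = b ⊗ₜ[k] x := by
  simp [Bprime, sub_eq_zero]

@[simp] lemma normalBasisMap_tmul (γ : C →ₗ[k] A) (b : Bprime ψ x) (c : C) :
    normalBasisMap ψ x γ (b ⊗ₜ[k] c) = b * γ c := rfl

end

lemma qprimeCond_iff {q : C →ₗ[k] A} :
    QprimeCond ψ x q ↔ twistedMap ψ q = (TensorProduct.mk k A C).flip x ∘ₗ q := by
  rw [LinearMap.ext_iff]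
  rfl

lemma smulLift_coaction_of_isColinear {M : Type*} [AddCommMonoid M] [Module A M] [Module k M]
    [IsScalarTower k A M] {γ : C →ₗ[k] A} (hγ : IsColinear ψ x γ) (F : C →ₗ[k] M) (c : C) :
    smulLift F (coaction ψ x (γ c)) = convSMul γ F c := by
  rw [← comp_apply (coaction ψ x) γ, hγ]
  rfl

lemma starCan_apply_of_isColinear {γ : C →ₗ[k] A} (hγ : IsColinear ψ x γ) (f : C →ₗ[k] A)
    (c : C) : starCan ψ x f (γ c) = conv γ f c := by
  rw [starCan_eq, comp_apply, smulLift_coaction_of_isColinear hγ, convSMul_eq_conv]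

lemma isColinear_comp_mk (h : Bprime ψ x ⊗[k] C →ₗ[k] A)
    (hh : ∀ y : Bprime ψ x ⊗[k] C, ψ (x ⊗ₜ[k] h y) = rTensor C h
      ((TensorProduct.assoc k (Bprime ψ x) C C).symm (lTensor (Bprime ψ x) comul y)))
    (b : Bprime ψ x) : IsColinear ψ x (h ∘ₗ TensorProduct.mk k (Bprime ψ x) C b) := by
  have hb : rTensor C h ∘ₗ (TensorProduct.assoc k (Bprime ψ x) C C).symm.toLinearMap ∘ₗ
      TensorProduct.mk k (Bprime ψ x) (C ⊗[k] C) b = rTensor C (h ∘ₗ TensorProduct.mk k _ C b) := by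
    ext; simp
  ext c
  simpa using (hh (b ⊗ₜ[k] c)).trans (LinearMap.congr_fun hb (comul c))

end Entwining

namespace IsEntwining

variable {ψ : C ⊗[k] A →ₗ[k] A ⊗[k] C} {x : C} (hψ : IsEntwining k ψ)
include hψ

lemma apply_tmul_mul (c : C) (a b : A) :
    ψ (c ⊗ₜ[k] (a * b)) = smulLift ψ (TensorProduct.assoc k A C A (ψ (c ⊗ₜ[k] a) ⊗ₜ[k] b)) := by
  simpa [smulLift_eq_rTensor_mul'] using LinearMap.congr_fun hψ.mul_compat (c ⊗ₜ[k] (a ⊗ₜ[k] b))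

lemma coaction_mul (a b : A) :
    coaction ψ x (a * b) = smulLift ψ (TensorProduct.assoc k A C A (coaction ψ x a ⊗ₜ[k] b)) :=
  hψ.apply_tmul_mul x a b

lemma coaction_mul_of_mem {b : A} (hb : b ∈ Bprime ψ x) (a : A) :
    coaction ψ x (b * a) = b • coaction ψ x a := by
  rw [hψ.coaction_mul, mem_Bprime_iff.mp hb]
  rfl

lemma one_mem_Bprime : (1 : A) ∈ Bprime ψ x :=
  mem_Bprime_iff.mpr (hψ.one_compat x)

lemma mul_mem_Bprime {b b' : A} (hb : b ∈ Bprime ψ x) (hb' : b' ∈ Bprime ψ x) :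
    b * b' ∈ Bprime ψ x := by
  rw [mem_Bprime_iff, hψ.coaction_mul_of_mem hb, mem_Bprime_iff.mp hb', TensorProduct.smul_tmul',
    smul_eq_mul]

lemma starCan_mul_of_mem (f : C →ₗ[k] A) {b : A} (hb : b ∈ Bprime ψ x) (a : A) :
    starCan ψ x f (b * a) = b * starCan ψ x f a := by
  rw [starCan_eq, comp_apply, hψ.coaction_mul_of_mem hb, smulLift_smul]
  rfl

lemma coaction_coassoc (hx : comul (R := k) x = x ⊗ₜ[k] x) :
    rTensor C (coaction ψ x) ∘ₗ coaction ψ x =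
      (TensorProduct.assoc k A C C).symm.toLinearMap ∘ₗ lTensor A comul ∘ₗ coaction ψ x := by
  have hψx (w : A ⊗[k] C) :
      rTensor C ψ ((TensorProduct.assoc k C A C).symm (x ⊗ₜ[k] w)) = rTensor C (coaction ψ x) w := by
    induction w using TensorProduct.induction_on with
    | zero => simp
    | tmul a c => rfl
    | add w w' hw hw' => simp only [tmul_add, map_add, hw, hw']
  ext a
  have h := LinearMap.congr_fun hψ.comul_compat (x ⊗ₜ[k] a)
  simp only [coe_comp, Function.comp_apply, rTensor_tmul, hx, LinearEquiv.coe_coe,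
    TensorProduct.assoc_tmul, lTensor_tmul, hψx] at h
  simp [h]

lemma starCan_smashOne (hx : counit (R := k) x = 1) :
    starCan ψ x (smashOne k A C) = LinearMap.id := by
  have hunit : smulLift (smashOne k A C) =
      (TensorProduct.rid k A).toLinearMap ∘ₗ lTensor A (counit (R := k) (A := C)) := by
    ext; simp [smashOne, Algebra.algebraMap_eq_smul_one]
  ext a
  simp [starCan_eq, hunit, hψ.counit_compat, hx]

lemma starCan_conv (hx : comul (R := k) x = x ⊗ₜ[k] x) (f g : C →ₗ[k] A) (a : A) :
    starCan ψ x (conv f g) a = mul' k A (map (starCan ψ x f) g (coaction ψ x a)) := by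
  have hcomp : mul' k A ∘ₗ lTensor A g ∘ₗ rTensor C (smulLift f) ∘ₗ
      (TensorProduct.assoc k A C C).symm.toLinearMap = smulLift (mul' k A ∘ₗ map f g) := by
    ext; simp [mul_assoc]
  calc starCan ψ x (conv f g) a
      = smulLift (mul' k A ∘ₗ map f g) (lTensor A comul (coaction ψ x a)) := by
        rw [starCan_eq, conv, ← comp_assoc comul,
          ← smulLift_comp_lTensor (mul' k A ∘ₗ map f g) comul]
        rfl
    _ = mul' k A (lTensor A g (rTensor C (smulLift f)
          (rTensor C (coaction ψ x) (coaction ψ x a)))) := by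
        rw [← LinearMap.comp_apply (rTensor C _) (coaction ψ x), hψ.coaction_coassoc hx, ← hcomp]
        rfl
    _ = mul' k A (map (starCan ψ x f) g (coaction ψ x a)) := by
        rw [starCan_eq, ← map_comp_rTensor, ← lTensor_comp_rTensor]
        rfl

lemma coaction_starCan (hx : comul (R := k) x = x ⊗ₜ[k] x) (q : C →ₗ[k] A) (a : A) :
    coaction ψ x (starCan ψ x q a) = smulLift (twistedMap ψ q) (coaction ψ x a) := by
  have hmul (w : A ⊗[k] C) : coaction ψ x (mul' k A (lTensor A q w)) =
      smulLift ψ (TensorProduct.assoc k A C A (lTensor (A ⊗[k] C) q (rTensor C (coaction ψ x) w))) := by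
    induction w using TensorProduct.induction_on with
    | zero => simp
    | tmul a c => exact hψ.coaction_mul a (q c)
    | add w w' hw hw' => simp only [map_add, hw, hw']
  have hcomp : smulLift ψ ∘ₗ (TensorProduct.assoc k A C A).toLinearMap ∘ₗ lTensor (A ⊗[k] C) q ∘ₗ
      (TensorProduct.assoc k A C C).symm.toLinearMap = smulLift (ψ ∘ₗ lTensor C q) := by
    ext; simp
  calc coaction ψ x (starCan ψ x q a)
      = smulLift ψ (TensorProduct.assoc k A C A (lTensor (A ⊗[k] C) q
          (rTensor C (coaction ψ x) (coaction ψ x a)))) := hmul _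
    _ = smulLift (ψ ∘ₗ lTensor C q) (lTensor A comul (coaction ψ x a)) := by
        rw [← LinearMap.comp_apply (rTensor C _), hψ.coaction_coassoc hx, ← hcomp]
        rfl
    _ = smulLift (twistedMap ψ q) (coaction ψ x a) := by
        rw [twistedMap, ← comp_assoc, ← smulLift_comp_lTensor (ψ ∘ₗ lTensor C q) comul]
        rfl

lemma starCan_mem_Bprime (hx : comul (R := k) x = x ⊗ₜ[k] x) {q : C →ₗ[k] A}
    (hq : QprimeCond ψ x q) (a : A) : starCan ψ x q a ∈ Bprime ψ x := by
  rw [mem_Bprime_iff, hψ.coaction_starCan hx, qprimeCond_iff.mp hq, smulLift_flip_mk_comp,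
    starCan_eq]
  rfl

lemma twistedMap_smashOne : twistedMap ψ (smashOne k A C) = TensorProduct.mk k A C 1 := by
  ext c
  simp [twistedMap, smashOne, lTensor_comp, hψ.one_compat]

lemma twistedMap_conv (f g : C →ₗ[k] A) :
    twistedMap ψ (conv f g) = smulLift ψ ∘ₗ (TensorProduct.assoc k A C A).toLinearMap ∘ₗ
      map (twistedMap ψ f) g ∘ₗ comul := by
  have key : ψ ∘ₗ lTensor C (mul' k A ∘ₗ map f g) ∘ₗ (TensorProduct.assoc k C C C).toLinearMap =
      smulLift ψ ∘ₗ (TensorProduct.assoc k A C A).toLinearMap ∘ₗ map (ψ ∘ₗ lTensor C f) g := by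
    apply TensorProduct.ext_threefold
    intro c₁ c₂ c₃
    simp [hψ.apply_tmul_mul]
  calc twistedMap ψ (conv f g)
      = (ψ ∘ₗ lTensor C (mul' k A ∘ₗ map f g) ∘ₗ (TensorProduct.assoc k C C C).toLinearMap) ∘ₗ
          rTensor C comul ∘ₗ comul := by
        simp only [twistedMap, conv, lTensor_comp, comp_assoc, coassoc]
    _ = _ := by
        simp only [key, comp_assoc, twistedMap]
        rw [← comp_assoc comul, map_comp_rTensor]
        simp only [comp_assoc]

lemma isColinear_of_conv_eq {lam lamInv : C →ₗ[k] A} (hq : QprimeCond ψ x lam)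
    (h₁ : conv lam lamInv = smashOne k A C) (h₂ : conv lamInv lam = smashOne k A C) :
    IsColinear ψ x lamInv := by
  have hsmul : smulLift (coaction ψ x ∘ₗ lamInv) ∘ₗ rTensor C lam = smulLift ψ ∘ₗ
      (TensorProduct.assoc k A C A).toLinearMap ∘ₗ
        map ((TensorProduct.mk k A C).flip x ∘ₗ lam) lamInv := by
    ext; simp
  refine (convSMul_leftInverse h₂).injective ?_
  calc convSMul lam (coaction ψ x ∘ₗ lamInv)
      = twistedMap ψ (conv lam lamInv) := by
        rw [hψ.twistedMap_conv, qprimeCond_iff.mp hq, convSMul, ← comp_assoc comul, hsmul]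
        simp only [comp_assoc]
    _ = convSMul (conv lam lamInv) (TensorProduct.mk k A C 1) := by
        rw [h₁, hψ.twistedMap_smashOne, smashOne_convSMul]
    _ = convSMul lam (rTensor C lamInv ∘ₗ comul) := by
        rw [← convSMul_convSMul, convSMul_mk_one]

lemma qprimeCond_of_starCan_mem (hx : comul (R := k) x = x ⊗ₜ[k] x) {γ γ' q : C →ₗ[k] A}
    (hγ : IsColinear ψ x γ) (hγ' : conv γ' γ = smashOne k A C)
    (hq : ∀ a, starCan ψ x q a ∈ Bprime ψ x) : QprimeCond ψ x q := by
  rw [qprimeCond_iff]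
  refine (convSMul_leftInverse hγ').injective (LinearMap.ext fun c => ?_)
  rw [← smulLift_coaction_of_isColinear hγ, ← smulLift_coaction_of_isColinear hγ,
    ← hψ.coaction_starCan hx, mem_Bprime_iff.mp (hq _), smulLift_flip_mk_comp, starCan_eq]
  rfl

lemma starCan_injective_of_conv_eq {lam lamInv : C →ₗ[k] A} (hq : QprimeCond ψ x lam)
    (h₁ : conv lam lamInv = smashOne k A C) (h₂ : conv lamInv lam = smashOne k A C) :
    Function.Injective (starCan ψ x) := by
  intro f f' h
  have hγ := hψ.isColinear_of_conv_eq hq h₁ h₂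
  refine (convSMul_leftInverse h₁).injective ?_
  ext c
  rw [convSMul_eq_conv, convSMul_eq_conv, ← starCan_apply_of_isColinear hγ, h,
    starCan_apply_of_isColinear hγ]

lemma exists_starCan_eq_of_conv_eq (hx₁ : comul (R := k) x = x ⊗ₜ[k] x)
    (hx₂ : counit (R := k) x = 1) {lam lamInv : C →ₗ[k] A} (hq : QprimeCond ψ x lam)
    (h₁ : conv lam lamInv = smashOne k A C) (g : A →ₗ[k] A)
    (hg : ∀ b a : A, b ∈ Bprime ψ x → g (b * a) = b * g a) :
    ∃ f : C →ₗ[k] A, starCan ψ x f = g := by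
  have hpull (w : A ⊗[k] C) : mul' k A (map (starCan ψ x lam) (g ∘ₗ lamInv) w) =
      g (mul' k A (map (starCan ψ x lam) lamInv w)) := by
    induction w using TensorProduct.induction_on with
    | zero => simp
    | tmul a c => exact (hg _ _ (hψ.starCan_mem_Bprime hx₁ hq a)).symm
    | add w w' hw hw' => simp only [map_add, hw, hw']
  refine ⟨conv lam (g ∘ₗ lamInv), LinearMap.ext fun a => ?_⟩
  rw [hψ.starCan_conv hx₁, hpull, ← hψ.starCan_conv hx₁, h₁, hψ.starCan_smashOne hx₂, id_apply]

lemma normalBasisMap_colinear {γ : C →ₗ[k] A} (hγ : IsColinear ψ x γ) (y : Bprime ψ x ⊗[k] C) :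
    ψ (x ⊗ₜ[k] normalBasisMap ψ x γ y) = rTensor C (normalBasisMap ψ x γ)
      ((TensorProduct.assoc k (Bprime ψ x) C C).symm (lTensor (Bprime ψ x) comul y)) := by
  induction y using TensorProduct.induction_on with
  | zero => simp
  | add y y' hy hy' => simp only [map_add, tmul_add, hy, hy']
  | tmul b c =>
    have hb : rTensor C (normalBasisMap ψ x γ) ∘ₗ
        (TensorProduct.assoc k (Bprime ψ x) C C).symm.toLinearMap ∘ₗ
          TensorProduct.mk k (Bprime ψ x) (C ⊗[k] C) b =
        rTensor C (mulLeft k (b : A)) ∘ₗ rTensor C γ := by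
      ext; simp
    calc ψ (x ⊗ₜ[k] normalBasisMap ψ x γ (b ⊗ₜ[k] c)) = (b : A) • coaction ψ x (γ c) :=
          hψ.coaction_mul_of_mem b.2 (γ c)
      _ = rTensor C (mulLeft k (b : A)) (rTensor C γ (comul c)) := by
          rw [← comp_apply (coaction ψ x) γ, hγ, smul_eq_rTensor_mulLeft]
          rfl
      _ = _ := (LinearMap.congr_fun hb (comul c)).symm

lemma normalBasisMap_bijective (hx₁ : comul (R := k) x = x ⊗ₜ[k] x)
    (hx₂ : counit (R := k) x = 1) {lam lamInv : C →ₗ[k] A} (hq : QprimeCond ψ x lam)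
    (h₁ : conv lam lamInv = smashOne k A C) (h₂ : conv lamInv lam = smashOne k A C) :
    Function.Bijective (normalBasisMap ψ x lamInv) := by
  let p : A →ₗ[k] Bprime ψ x := codRestrict _ (starCan ψ x lam) (hψ.starCan_mem_Bprime hx₁ hq)
  have hγ := hψ.isColinear_of_conv_eq hq h₁ h₂
  refine Function.bijective_iff_has_inverse.mpr ⟨rTensor C p ∘ₗ coaction ψ x, ?_, ?_⟩
  · intro y
    induction y using TensorProduct.induction_on with
    | zero => simp
    | add y y' hy hy' => simp only [map_add, hy, hy']
    | tmul b c =>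
      have hp : p ∘ₗ mulLeft k (b : A) ∘ₗ lamInv = toSpanSingleton k _ b ∘ₗ counit := by
        ext c
        simp [p, hψ.starCan_mul_of_mem _ b.2, starCan_apply_of_isColinear hγ, h₂, smashOne_apply]
      calc rTensor C p (coaction ψ x (b * lamInv c))
          = rTensor C (p ∘ₗ mulLeft k (b : A) ∘ₗ lamInv) (comul c) := by
            rw [hψ.coaction_mul_of_mem b.2, ← comp_apply (coaction ψ x), hγ,
              smul_eq_rTensor_mulLeft]
            simp only [comp_apply, rTensor_comp]
        _ = b ⊗ₜ[k] c := by simp [hp, rTensor_comp]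
  · intro a
    have hmap : normalBasisMap ψ x lamInv ∘ₗ rTensor C p =
        mul' k A ∘ₗ map (starCan ψ x lam) lamInv := by
      rw [normalBasisMap, comp_assoc, map_comp_rTensor, subtype_comp_codRestrict]
    rw [comp_apply, ← comp_apply (normalBasisMap ψ x lamInv), hmap, comp_apply,
      ← hψ.starCan_conv hx₁, h₁, hψ.starCan_smashOne hx₂, id_apply]

lemma normalBasisMap_injective : Function.Injective (normalBasisMap ψ x) := by
  intro t t' h
  ext c
  simpa using LinearMap.congr_fun h ((⟨1, hψ.one_mem_Bprime⟩ : Bprime ψ x) ⊗ₜ[k] c)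

lemma eq_normalBasisMap (h : Bprime ψ x ⊗[k] C →ₗ[k] A)
    (hh : ∀ b : A, b ∈ Bprime ψ x → ∀ (b' : Bprime ψ x) (c : C) (hm : b * (b' : A) ∈ Bprime ψ x),
      h ((⟨b * (b' : A), hm⟩ : Bprime ψ x) ⊗ₜ[k] c) = b * h (b' ⊗ₜ[k] c)) :
    h = normalBasisMap ψ x (h ∘ₗ TensorProduct.mk k (Bprime ψ x) C ⟨1, hψ.one_mem_Bprime⟩) := by
  ext b c
  simpa using hh b b.2 ⟨1, hψ.one_mem_Bprime⟩ c (by simp)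

lemma normalBasisMap_rTensor_mulLeft {b : A} (hb : b ∈ Bprime ψ x) (t : C →ₗ[k] A)
    (y : Bprime ψ x ⊗[k] C) :
    normalBasisMap ψ x t
        (rTensor C ((mulLeft k b).restrict fun _ hb' => hψ.mul_mem_Bprime hb hb') y) =
      b * normalBasisMap ψ x t y := by
  induction y using TensorProduct.induction_on with
  | zero => simp
  | add y y' hy hy' => simp only [map_add, mul_add, hy, hy']
  | tmul b' c => exact mul_assoc b b' (t c)

lemma starCan_comp_normalBasisMap {γ : C →ₗ[k] A} (hγ : IsColinear ψ x γ) (g : C →ₗ[k] A) :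
    starCan ψ x g ∘ₗ normalBasisMap ψ x γ = normalBasisMap ψ x (conv γ g) := by
  ext b c
  simp [hψ.starCan_mul_of_mem _ b.2, starCan_apply_of_isColinear hγ]

lemma bijective_conv_of_normalBasis (hinj : Function.Injective (starCan ψ x))
    (hsurj : ∀ g : A →ₗ[k] A, (∀ b a : A, b ∈ Bprime ψ x → g (b * a) = b * g a) →
      ∃ f : C →ₗ[k] A, starCan ψ x f = g)
    {γ : C →ₗ[k] A} (hγ : IsColinear ψ x γ) (hbij : Function.Bijective (normalBasisMap ψ x γ)) :
    Function.Bijective (conv γ) := by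
  refine ⟨fun g g' h => hinj ?_, fun t => ?_⟩
  · rw [← LinearMap.cancel_right hbij.surjective, hψ.starCan_comp_normalBasisMap hγ,
      hψ.starCan_comp_normalBasisMap hγ, h]
  let e := LinearEquiv.ofBijective _ hbij
  let T := normalBasisMap ψ x t ∘ₗ e.symm.toLinearMap
  have hT : T ∘ₗ normalBasisMap ψ x γ = normalBasisMap ψ x t := LinearMap.ext fun y => by
    simp only [T, e, comp_apply, LinearEquiv.coe_coe, LinearEquiv.ofBijective_symm_apply_apply]
  have hTlin (b a : A) (hb : b ∈ Bprime ψ x) : T (b * a) = b * T a := by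
    obtain ⟨y, rfl⟩ := hbij.surjective a
    rw [← hψ.normalBasisMap_rTensor_mulLeft hb, ← comp_apply T, ← comp_apply T, hT,
      hψ.normalBasisMap_rTensor_mulLeft hb]
  obtain ⟨f, hf⟩ := hsurj T hTlin
  exact ⟨f, hψ.normalBasisMap_injective (by rw [← hψ.starCan_comp_normalBasisMap hγ, hf, hT])⟩

lemma isCleft_of_normalBasis (hx₁ : comul (R := k) x = x ⊗ₜ[k] x)
    (hinj : Function.Injective (starCan ψ x))
    (hsurj : ∀ g : A →ₗ[k] A, (∀ b a : A, b ∈ Bprime ψ x → g (b * a) = b * g a) →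
      ∃ f : C →ₗ[k] A, starCan ψ x f = g)
    {γ : C →ₗ[k] A} (hγ : IsColinear ψ x γ) (hbij : Function.Bijective (normalBasisMap ψ x γ)) :
    IsCleft ψ x := by
  have hconv := hψ.bijective_conv_of_normalBasis hinj hsurj hγ hbij
  obtain ⟨lam, hlam⟩ := hconv.2 (smashOne k A C)
  have hlam' : conv lam γ = smashOne k A C :=
    hconv.1 (by rw [← conv_assoc, hlam, smashOne_conv, conv_smashOne])
  have hmem (a : A) : starCan ψ x lam a ∈ Bprime ψ x := by
    obtain ⟨y, rfl⟩ := hbij.surjective a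
    rw [← comp_apply (starCan ψ x lam), hψ.starCan_comp_normalBasisMap hγ, hlam]
    induction y using TensorProduct.induction_on with
    | zero => simp
    | add y y' hy hy' => rw [map_add]; exact add_mem hy hy'
    | tmul b c => simpa [smashOne_apply] using (Bprime ψ x).smul_mem (counit c) b.2
  exact ⟨lam, γ, fun c => by rw [hlam', smashOne_apply], fun c => by rw [hlam, smashOne_apply],
    hψ.qprimeCond_of_starCan_mem hx₁ hγ hlam' hmem⟩

end IsEntwining

/-- `(A,C,ψ,x)` is cleft iff `*can : #(C,A) → End_{B'}(A)` is bijective and the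
right normal basis property holds (`A ≅ B' ⊗ C` as left `B'`-modules and right
`C`-comodules). -/
theorem cleft_iff_can_bijective_and_normal_basis
    (ψ : C ⊗[k] A →ₗ[k] A ⊗[k] C) (hψ : IsEntwining k ψ)
    (x : C) (hx1 : Coalgebra.comul (R := k) x = x ⊗ₜ[k] x)
    (hx2 : Coalgebra.counit (R := k) x = (1 : k)) :
    IsCleft ψ x ↔
      -- *can takes values in End_{B'}(A) …
      ((∀ (f : C →ₗ[k] A) (b a : A), b ∈ Bprime ψ x →
          starCan ψ x f (b * a) = b * starCan ψ x f a) ∧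
        -- … is injective …
        Function.Injective (fun f : C →ₗ[k] A => starCan ψ x f) ∧
        -- … and surjective onto End_{B'}(A)
        (∀ g : A →ₗ[k] A, (∀ b a : A, b ∈ Bprime ψ x → g (b * a) = b * g a) →
          ∃ f : C →ₗ[k] A, starCan ψ x f = g) ∧
        -- right normal basis property
        (∃ h : (↥(Bprime ψ x)) ⊗[k] C →ₗ[k] A,
          Function.Bijective h ∧
          -- h is left B'-linear
          (∀ (b : A) (hb : b ∈ Bprime ψ x) (b' : ↥(Bprime ψ x)) (c : C)
              (hm : b * (b' : A) ∈ Bprime ψ x),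
            h ((⟨b * (b' : A), hm⟩ : ↥(Bprime ψ x)) ⊗ₜ[k] c) = b * h (b' ⊗ₜ[k] c)) ∧
          -- h is right C-colinear
          (∀ y : (↥(Bprime ψ x)) ⊗[k] C,
            ψ (x ⊗ₜ[k] h y) = LinearMap.rTensor C h
              ((TensorProduct.assoc k (↥(Bprime ψ x)) C C).symm
                (LinearMap.lTensor (↥(Bprime ψ x)) Coalgebra.comul y))))) := by
  constructor
  · rintro ⟨lam, lamInv, h₁, h₂, hq⟩
    replace h₁ : conv lam lamInv = smashOne k A C := LinearMap.ext fun c => by rw [h₁, smashOne_apply]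
    replace h₂ : conv lamInv lam = smashOne k A C := LinearMap.ext fun c => by rw [h₂, smashOne_apply]
    exact ⟨fun f b a hb => hψ.starCan_mul_of_mem f hb a, hψ.starCan_injective_of_conv_eq hq h₁ h₂,
      hψ.exists_starCan_eq_of_conv_eq hx1 hx2 hq h₁, normalBasisMap ψ x lamInv,
      hψ.normalBasisMap_bijective hx1 hx2 hq h₁ h₂, fun b _ b' c _ => mul_assoc b b' (lamInv c),
      hψ.normalBasisMap_colinear (hψ.isColinear_of_conv_eq hq h₁ h₂)⟩
  · rintro ⟨-, hinj, hsurj, h, hbij, hlin, hcolin⟩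
    rw [hψ.eq_normalBasisMap h hlin] at hbij
    exact hψ.isCleft_of_normalBasis hx1 hinj hsurj (isColinear_comp_mk h hcolin _) hbij

end
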